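/- On a reachable network with n nodes, sup over probability distributions q on V of the minimum over paths P ∈ P of q(s(P)) + q(d(P)) equals 2/n. The supremum is attained by the uniform distribution. -/
import Mathlib

/-- On a reachable network (paths indexed by `ι`, with source `s` and destination `d`),
the best worst-case probability, over probability distributions `q` on the node set `V`,
of covering the two endpoints of a path, i.e.
  sup_q min_{P ∈ 𝒫} (q(s(P)) + q(d(P))),
equals 2/n where n = |V|; the supremum is attained by the uniform distribution. -/
theorem uniform_guessing_reachable
    {V : Type} [Fintype V] [DecidableEq V]
    {ι : Type} [Fintype ι] [Nonempty ι]
    (s d : ι → V) (hsd : ∀ i, s i ≠ d i)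
    (hreach : ∀ u v : V, u ≠ v →
      ∃ i, (s i = u ∧ d i = v) ∨ (s i = v ∧ d i = u))
    (n : ℕ) (hn : n = Fintype.card V) :
    IsGreatest
      { x : ℝ | ∃ q : V → ℝ, (∀ v, 0 ≤ q v) ∧ (∑ v, q v) = 1 ∧
          x = sInf { y : ℝ | ∃ i : ι, y = q (s i) + q (d i) } }
      (2 / n)
    ∧ sInf { y : ℝ | ∃ i : ι,
        y = (fun _ : V => (n : ℝ)⁻¹) (s i) + (fun _ : V => (n : ℝ)⁻¹) (d i) } = 2 / n := by
  obtain ⟨i0⟩ := ‹Nonempty ι›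
  have hntV : Nontrivial V := ⟨s i0, d i0, hsd i0⟩
  have hn2 : 2 ≤ n := by rw [hn]; exact Fintype.one_lt_card
  have hn0 : (0:ℝ) < n := by
    have : (2:ℝ) ≤ n := by exact_mod_cast hn2
    linarith
  have hnne : (n:ℝ) ≠ 0 := ne_of_gt hn0
  -- uniform set equals {2/n}
  have hset : { y : ℝ | ∃ i : ι,
      y = (fun _ : V => (n : ℝ)⁻¹) (s i) + (fun _ : V => (n : ℝ)⁻¹) (d i) } = {2 / (n:ℝ)} := by
    ext y
    simp only [Set.mem_setOf_eq, Set.mem_singleton_iff]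
    constructor
    · rintro ⟨i, rfl⟩
      rw [div_eq_mul_inv, two_mul]
    · rintro rfl
      exact ⟨i0, by rw [div_eq_mul_inv, two_mul]⟩
  have huni : sInf { y : ℝ | ∃ i : ι,
      y = (fun _ : V => (n : ℝ)⁻¹) (s i) + (fun _ : V => (n : ℝ)⁻¹) (d i) } = 2 / n := by
    rw [hset, csInf_singleton]
  refine ⟨⟨⟨fun _ => (n:ℝ)⁻¹, fun _ => by positivity, ?_, huni.symm⟩, ?_⟩, huni⟩
  · rw [Finset.sum_const, Finset.card_univ, ← hn, nsmul_eq_mul]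
    field_simp
  · rintro x ⟨q, hq0, hq1, rfl⟩
    -- find u v with q u + q v ≤ 2/n
    obtain ⟨u, -, hu⟩ := Finset.exists_min_image Finset.univ q ⟨s i0, Finset.mem_univ _⟩
    have herase : ((Finset.univ : Finset V).erase u).Nonempty := by
      rw [← Finset.card_pos, Finset.card_erase_of_mem (Finset.mem_univ _)]
      rw [Finset.card_univ, ← hn]; omega
    obtain ⟨v, hvmem, hv⟩ := Finset.exists_min_image _ q herase
    have huv : u ≠ v := (Finset.ne_of_mem_erase hvmem).symm
    -- q u ≤ 1/n  (as n * q u ≤ 1)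
    have h1 : (n : ℝ) * q u ≤ 1 := by
      have := Finset.card_nsmul_le_sum Finset.univ q (q u) (fun x hx => hu x hx)
      rwa [hq1, Finset.card_univ, ← hn, nsmul_eq_mul] at this
    -- (n-1) * q v ≤ 1 - q u
    have h2 : ((n : ℝ) - 1) * q v ≤ 1 - q u := by
      have hle := Finset.card_nsmul_le_sum _ q (q v) (fun x hx => hv x hx)
      have hsum : ∑ x ∈ Finset.univ.erase u, q x = 1 - q u := by
        rw [← hq1]
        exact Finset.sum_erase_eq_sub (Finset.mem_univ u)
      rw [hsum, Finset.card_erase_of_mem (Finset.mem_univ _), Finset.card_univ, ← hn,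
        nsmul_eq_mul] at hle
      have : ((n - 1 : ℕ) : ℝ) = (n : ℝ) - 1 := by
        push_cast [Nat.cast_sub (by omega : 1 ≤ n)]; ring
      rwa [this] at hle
    have hkey : q u + q v ≤ 2 / n := by
      rw [le_div_iff₀ hn0]
      have hn2' : (2 : ℝ) ≤ n := by exact_mod_cast hn2
      have hA := mul_le_mul_of_nonneg_left h2 (le_of_lt hn0)
      have hB : (n : ℝ) * ((n : ℝ) - 2) * q u ≤ (n : ℝ) - 2 := by
        nlinarith [mul_nonneg (sub_nonneg.2 hn2') (sub_nonneg.2 h1)]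
      nlinarith [hA, hB, hq0 u, hq0 v]
    obtain ⟨i, hi⟩ := hreach u v huv
    have hval : q (s i) + q (d i) = q u + q v := by
      rcases hi with ⟨h1', h2'⟩ | ⟨h1', h2'⟩ <;> rw [h1', h2'] <;> ring
    have hbdd : BddBelow { y : ℝ | ∃ i : ι, y = q (s i) + q (d i) } := by
      have : { y : ℝ | ∃ i : ι, y = q (s i) + q (d i) } =
          Set.range (fun i => q (s i) + q (d i)) := by
        ext y; simp [eq_comm]
      rw [this]
      exact (Set.finite_range _).bddBelow
    calc sInf { y : ℝ | ∃ i : ι, y = q (s i) + q (d i) }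
        ≤ q (s i) + q (d i) := csInf_le hbdd ⟨i, rfl⟩
      _ = q u + q v := hval
      _ ≤ 2 / n := hkey
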